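/- The noisy voter model is in general not reversible: there exist a finite simple connected graph G (with at least two vertices) and a noise parameter δ > 0 such that no probability measure μ on {0,1}^{V(G)} satisfies the detailed balance condition μ(η)·Q(η, η') = μ(η')·Q(η', η) for all configurations η, η', where Q is the rate matrix of the noisy voter model on G with parameter δ. -/
import Mathlib


open Finset

open scoped Classical in
/-- Flip rate of the noisy voter model with noise `δ` at vertex `x` in configuration `η`. -/
noncomputable def nvRate {V : Type*} [Fintype V] (G : SimpleGraph V)
    (δ : ℝ) (x : V) (η : V → Bool) : ℝ :=
  (1 / (2 * δ + 1)) *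
    ((1 / (G.degree x : ℝ)) * ((Finset.univ.filter fun y => G.Adj x y ∧ η y ≠ η x).card : ℝ) + δ)

open scoped Classical in
/-- The rate matrix of the noisy voter model: single-spin flips occur at rate `nvRate`,
transitions changing two or more spins have rate `0`, and diagonal entries make rows sum to `0`. -/
noncomputable def nvQ {V : Type*} [Fintype V] [DecidableEq V] (G : SimpleGraph V)
    (δ : ℝ) : Matrix (V → Bool) (V → Bool) ℝ := fun η η' =>
  if η = η' then -∑ x, nvRate G δ x η
  else if (Finset.univ.filter fun v => η v ≠ η' v).card = 1 then
    ∑ x ∈ Finset.univ.filter (fun v => η v ≠ η' v), nvRate G δ x η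
  else 0

open SimpleGraph


lemma nvRate_eval {V : Type*} [Fintype V] (G : SimpleGraph V) [DecidableRel G.Adj]
    (δ : ℝ) (x : V) (η : V → Bool) :
    nvRate G δ x η = (1 / (2 * δ + 1)) *
      ((1 / (G.degree x : ℝ)) * ((Finset.univ.filter fun y => G.Adj x y ∧ η y ≠ η x).card : ℝ) + δ) := by
  rw [nvRate]; congr!

open scoped Classical in
lemma nvQ_single {V : Type*} [Fintype V] [DecidableEq V] (G : SimpleGraph V) (δ : ℝ)
    (η η' : V → Bool) (x : V)
    (h : (Finset.univ.filter fun v => η v ≠ η' v) = {x}) :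
    nvQ G δ η η' = nvRate G δ x η := by
  have hne : η ≠ η' := by
    intro he
    have : x ∈ (Finset.univ.filter fun v => η v ≠ η' v) := h ▸ Finset.mem_singleton_self x
    simp [he] at this
  rw [nvQ]
  rw [if_neg hne, if_pos (by rw [h]; simp), h, Finset.sum_singleton]


instance : DecidableRel (pathGraph 3).Adj := fun _ _ =>
  decidable_of_iff _ pathGraph_adj.symm

/-- The noisy voter model is in general not reversible: there exist a finite simple connected
graph `G` with at least two vertices and a noise parameter `δ > 0` such that no probability
measure on `{0,1}^{V(G)}` satisfies the detailed balance condition for the rate matrix of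
the noisy voter model on `G` with parameter `δ`. -/
theorem noisy_voter_not_reversible :
    ∃ (m : ℕ) (G : SimpleGraph (Fin m)) (δ : ℝ), 2 ≤ m ∧ 0 < δ ∧ G.Connected ∧
      ¬ ∃ μ : (Fin m → Bool) → ℝ, (∀ η, 0 ≤ μ η) ∧ (∑ η, μ η = 1) ∧
        ∀ η η' : Fin m → Bool, μ η * nvQ G δ η η' = μ η' * nvQ G δ η' η := by
  refine ⟨3, pathGraph 3, 1, by norm_num, by norm_num, pathGraph_connected 2, ?_⟩
  rintro ⟨μ, -, hsum, hDB⟩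
  set G := pathGraph 3
  -- rate evaluation helper
  have hrate : ∀ (x : Fin 3) (η : Fin 3 → Bool) (d k : ℕ),
      G.degree x = d →
      (Finset.univ.filter fun y => G.Adj x y ∧ η y ≠ η x).card = k →
      nvRate G 1 x η = (1/3) * ((1/(d:ℝ)) * k + 1) := by
    intro x η d k hd hk
    rw [nvRate_eval, hd, hk]; norm_num
  -- detailed balance for single-flip pairs
  have key : ∀ (η η' : Fin 3 → Bool) (x : Fin 3),
      (Finset.univ.filter fun v => η v ≠ η' v) = {x} →
      μ η * nvRate G 1 x η = μ η' * nvRate G 1 x η' := by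
    intro η η' x h
    have h' : (Finset.univ.filter fun v => η' v ≠ η v) = {x} := by
      rw [← h]; apply Finset.filter_congr; intro v _; simp [ne_comm]
    have := hDB η η'
    rwa [nvQ_single G 1 η η' x h, nvQ_single G 1 η' η x h'] at this
  -- the eight configurations
  have E1 := key ![false,false,false] ![true,false,false] 0 (by decide)
  have E2 := key ![true,false,false] ![true,true,false] 1 (by decide)
  have E3 := key ![false,false,false] ![false,true,false] 1 (by decide)
  have E4 := key ![false,true,false] ![true,true,false] 0 (by decide)
  have E5 := key ![false,false,false] ![false,false,true] 2 (by decide)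
  have E6 := key ![true,false,false] ![true,false,true] 2 (by decide)
  have E7 := key ![false,true,false] ![false,true,true] 2 (by decide)
  have E8 := key ![true,true,false] ![true,true,true] 2 (by decide)
  rw [hrate 0 ![false,false,false] 1 0 (by decide) (by decide),
      hrate 0 ![true,false,false] 1 1 (by decide) (by decide)] at E1
  rw [hrate 1 ![true,false,false] 2 1 (by decide) (by decide),
      hrate 1 ![true,true,false] 2 1 (by decide) (by decide)] at E2
  rw [hrate 1 ![false,false,false] 2 0 (by decide) (by decide),
      hrate 1 ![false,true,false] 2 2 (by decide) (by decide)] at E3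
  rw [hrate 0 ![false,true,false] 1 1 (by decide) (by decide),
      hrate 0 ![true,true,false] 1 0 (by decide) (by decide)] at E4
  rw [hrate 2 ![false,false,false] 1 0 (by decide) (by decide),
      hrate 2 ![false,false,true] 1 1 (by decide) (by decide)] at E5
  rw [hrate 2 ![true,false,false] 1 0 (by decide) (by decide),
      hrate 2 ![true,false,true] 1 1 (by decide) (by decide)] at E6
  rw [hrate 2 ![false,true,false] 1 1 (by decide) (by decide),
      hrate 2 ![false,true,true] 1 0 (by decide) (by decide)] at E7
  rw [hrate 2 ![true,true,false] 1 1 (by decide) (by decide),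
      hrate 2 ![true,true,true] 1 0 (by decide) (by decide)] at E8
  have hz : ∀ η : Fin 3 → Bool, μ η = 0 := by
    have h000 : μ ![false,false,false] = 0 := by linarith
    have h100 : μ ![true,false,false] = 0 := by linarith
    have h010 : μ ![false,true,false] = 0 := by linarith
    have h110 : μ ![true,true,false] = 0 := by linarith
    have h001 : μ ![false,false,true] = 0 := by linarith
    have h101 : μ ![true,false,true] = 0 := by linarith
    have h011 : μ ![false,true,true] = 0 := by linarith
    have h111 : μ ![true,true,true] = 0 := by linarith
    intro η
    have hη : η = ![η 0, η 1, η 2] := by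
      funext i; fin_cases i <;> rfl
    rw [hη]
    rcases Bool.eq_false_or_eq_true (η 0) with h0 | h0 <;>
      rcases Bool.eq_false_or_eq_true (η 1) with h1 | h1 <;>
      rcases Bool.eq_false_or_eq_true (η 2) with h2 | h2 <;>
      rw [h0, h1, h2] <;> assumption
  rw [Finset.sum_eq_zero (fun η _ => hz η)] at hsum
  norm_num at hsum
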